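/- arXiv:2509.05137 — 2 statements merged into one kernel-verified Lean document; each statement's English description precedes it below -/
import Mathlib

section
/- Let C1 and C2 be sets of probability distributions on a domain X such that d_TV(p,q) > γ for every q ∈ C1 and every p ∈ C2. Suppose there exist a distribution Q over C1, a distribution p ∈ C2, and ζ ∈ (0,1/2) such that d_TV(|Q|^m, p^m) < ζ. Then for every learner A : X^m → Δ(X) there exists r ∈ C1 ∪ C2 such that P_{S∼r^m}[d_TV(A(S), r) > γ/2] ≥ 1/2 − ζ/2. -/
open scoped ENNReal NNReal

/-- Total variation distance between two discrete distributions. -/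
noncomputable def tv {X : Type*} (p q : PMF X) : ℝ :=
  (∑' x, |(p x).toReal - (q x).toReal|) / 2

/-- The distribution of an i.i.d. sample of size `m` from `p`, viewed as a multiset. -/
noncomputable def iid {X : Type*} (p : PMF X) : ℕ → PMF (Multiset X)
  | 0 => PMF.pure 0
  | n + 1 => (iid p n).bind fun s => p.map fun x => x ::ₘ s

/-- `|Q|^m` : first draw `q ∼ Q`, then an i.i.d. sample `S ∼ q^m`. -/
noncomputable def metaSample {X : Type*} (Q : PMF (PMF X)) (m : ℕ) : PMF (Multiset X) :=
  Q.bind fun q => iid q m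

/-- An adaptive adversary: a randomized map from samples (finite multisets) to samples. -/
abbrev Adversary (X : Type*) := Multiset X → PMF (Multiset X)

/-- `V(P)`: the distribution of `V S` for `S ∼ P` (including internal randomness). -/
noncomputable def advPush {X : Type*} (V : Adversary X) (P : PMF (Multiset X)) :
    PMF (Multiset X) := P.bind V

/-- An additive adversary only adds points: `S ⊆ V(S)` almost surely. -/
def IsAdditive {X : Type*} (V : Adversary X) : Prop :=
  ∀ S T, T ∈ (V S).support → S ≤ T

/-- A subtractive adversary only removes points: `V(S) ⊆ S` almost surely. -/
def IsSubtractive {X : Type*} (V : Adversary X) : Prop :=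
  ∀ S T, T ∈ (V S).support → T ≤ S

/-- Fixed constant budget `η`: `|V(S)|` depends only on `|S|` (via `c`), and for every `m`,
`η m − 1 < m·budget(V,m) ≤ η m` where `m·budget(V,m) = ||V(S)| − |S||`. -/
def FixedBudget {X : Type*} (V : Adversary X) (η : ℝ) : Prop :=
  ∃ c : ℕ → ℕ, (∀ S T, T ∈ (V S).support → Multiset.card T = c (Multiset.card S)) ∧
    ∀ m : ℕ, η * m - 1 < |(c m : ℝ) - m| ∧ |(c m : ℝ) - m| ≤ η * m

/-- Fixed constant budget `η` for an additive adversary (`m·budget(V,m) = |V(S)| − |S|`). -/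
def FixedBudgetAdd {X : Type*} (V : Adversary X) (η : ℝ) : Prop :=
  ∃ c : ℕ → ℕ, (∀ S T, T ∈ (V S).support → Multiset.card T = c (Multiset.card S)) ∧
    ∀ m : ℕ, η * m - 1 < (c m : ℝ) - m ∧ (c m : ℝ) - m ≤ η * m

/-- Fixed constant budget `η` for a subtractive adversary (`m·budget(V,m) = |S| − |V(S)|`). -/
def FixedBudgetSub {X : Type*} (V : Adversary X) (η : ℝ) : Prop :=
  ∃ c : ℕ → ℕ, (∀ S T, T ∈ (V S).support → Multiset.card T = c (Multiset.card S)) ∧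
    ∀ m : ℕ, η * m - 1 < (m : ℝ) - c m ∧ (m : ℝ) - c m ≤ η * m

/-- Probability of an event under a discrete distribution. -/
noncomputable def probEvent {β : Type*} (P : PMF β) (E : Set β) : ℝ≥0∞ :=
  P.toOuterMeasure E

/-- `A` with sample complexity `mc` learns the class `C` against adversary `V`,
up to error `bound + ε` with confidence `1 − δ` once `m ≥ mc ε δ`. -/
def RobustLearnerFor {X : Type*} (C : Set (PMF X)) (A : Multiset X → PMF X)
    (mc : ℝ → ℝ → ℕ) (V : Adversary X) (bound : ℝ) : Prop :=
  ∀ p ∈ C, ∀ ε δ : ℝ, 0 < ε → ε < 1 → 0 < δ → δ < 1 →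
    ∀ m : ℕ, mc ε δ ≤ m →
      1 - ENNReal.ofReal δ ≤
        probEvent ((iid p m).bind V) {T | tv (A T) p ≤ bound + ε}

/-- `C` is adaptively α-robustly learnable w.r.t. the single adversary `V` with budget `η`. -/
def RobustlyLearnableWrt {X : Type*} (C : Set (PMF X)) (α : ℝ)
    (V : Adversary X) (η : ℝ) : Prop :=
  ∃ A mc, RobustLearnerFor C A mc V (α * η)

/-- `V` (with budget `η`) is a universal α-adversary for `C`. -/
def UniversalAdversary {X : Type*} (C : Set (PMF X)) (α : ℝ)
    (V : Adversary X) (η : ℝ) : Prop :=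
  ¬ RobustlyLearnableWrt C α V η

/-- `C` is adaptively α-robustly learnable w.r.t. a class `𝒱` of adversaries
(each given with its budget). -/
def RobustlyLearnableWrtClass {X : Type*} (C : Set (PMF X)) (α : ℝ)
    (𝒱 : Set (Adversary X × ℝ)) : Prop :=
  ∃ A mc, ∀ Vη ∈ 𝒱, RobustLearnerFor C A mc Vη.1 (α * Vη.2)

/-- `C` is adaptively additively α-robustly learnable: one learner works simultaneously
against all additive adaptive adversaries with fixed constant budgets. -/
def AdditivelyRobustlyLearnable {X : Type*} (C : Set (PMF X)) (α : ℝ) : Prop :=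
  ∃ A mc, ∀ V : Adversary X, ∀ η : ℝ, 0 < η → η < 1 →
    IsAdditive V → FixedBudgetAdd V η → RobustLearnerFor C A mc V (α * η)

/-- `C` is adaptively subtractively α-robustly learnable. -/
def SubtractivelyRobustlyLearnable {X : Type*} (C : Set (PMF X)) (α : ℝ) : Prop :=
  ∃ A mc, ∀ V : Adversary X, ∀ η : ℝ, 0 < η → η < 1 →
    IsSubtractive V → FixedBudgetSub V η → RobustLearnerFor C A mc V (α * η)

/-- The pair `(V1, V2)` successfully `(γ,ζ)`-confuses `C`-generated samples of size `m`. -/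
def ConfusesPair {X : Type*} (C : Set (PMF X)) (V1 V2 : Adversary X)
    (γ ζ : ℝ) (m : ℕ) : Prop :=
  ∃ p ∈ C, ∃ Q : PMF (PMF X), Q.support ⊆ C ∧
    (∀ q ∈ Q.support, γ < tv p q) ∧
    tv (advPush V1 (metaSample Q m)) (advPush V2 (iid p m)) < ζ

/-- A single adversary `V` successfully `(γ,ζ)`-confuses `C`-generated samples of size `m`. -/
def Confuses {X : Type*} (C : Set (PMF X)) (V : Adversary X) (γ ζ : ℝ) (m : ℕ) : Prop :=
  ConfusesPair C V V γ ζ m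

/-- `p` is the distribution `p_{i,j,k} = (1 − 1/j)·δ_{(0,0)} + (1/j − 1/k)·U_{B_i×{2j+1}}
 + (1/k)·δ_{(i,2j+2)}` on `ℕ × ℕ`. -/
def IsPijk (B : ℕ → Finset ℕ) (i j k : ℕ) (p : PMF (ℕ × ℕ)) : Prop :=
  ∀ x : ℕ × ℕ,
    p x = (1 - ((j : ℝ≥0∞))⁻¹) * (if x = (0, 0) then 1 else 0)
      + (((j : ℝ≥0∞))⁻¹ - ((k : ℝ≥0∞))⁻¹) *
          (if x.1 ∈ B i ∧ x.2 = 2 * j + 1 then (((B i).card : ℝ≥0∞))⁻¹ else 0)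
      + ((k : ℝ≥0∞))⁻¹ * (if x = (i, 2 * j + 2) then 1 else 0)

/-- The class `C_g = {p_{i,j,g(j)} : i, j ∈ ℕ}` (for the meaningful parameters). -/
def Cg (B : ℕ → Finset ℕ) (g : ℕ → ℕ) : Set (PMF (ℕ × ℕ)) :=
  {p | ∃ i j : ℕ, 1 ≤ j ∧ j < g j ∧ (B i).Nonempty ∧ IsPijk B i j (g j) p}

/-- `g` is superlinear: `g(n)/n → ∞`. -/
def Superlinear (g : ℕ → ℕ) : Prop :=
  Filter.Tendsto (fun n => (g n : ℝ) / n) Filter.atTop Filter.atTop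

/-!
A learner that succeeds on every `r ∈ C1 ∪ C2` would turn the event "the output is `γ/2`-close
to `p`" into a test separating `p^m` from `|Q|^m`: by the triangle inequality this event is a
failure event for every `q ∈ C1`, so it has probability `> 1 - θ` under `p^m` and `≤ θ` under
`|Q|^m`, where `θ = 1/2 - ζ/2`. Hence `d_TV(|Q|^m, p^m) > 1 - 2θ = ζ`
(Le Cam's two-point method).
-/

namespace PMF

variable {α β : Type*}

lemma summable_toReal (p : PMF α) : Summable fun a => (p a).toReal :=
  ENNReal.summable_toReal p.tsum_coe_ne_top

lemma tsum_toReal (p : PMF α) : ∑' a, (p a).toReal = 1 := by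
  rw [← ENNReal.tsum_toReal_eq p.apply_ne_top, p.tsum_coe, ENNReal.toReal_one]

end PMF

section Probability

variable {α β : Type*}

lemma probEvent_mono (p : PMF α) {s t : Set α} (h : s ⊆ t) : probEvent p s ≤ probEvent p t :=
  p.toOuterMeasure.mono h

lemma probEvent_toReal (p : PMF α) (s : Set α) :
    (probEvent p s).toReal = ∑' a, s.indicator (fun a => (p a).toReal) a := by
  rw [probEvent, PMF.toOuterMeasure_apply, ENNReal.tsum_toReal_eq]
  · congr 1 with a
    by_cases h : a ∈ s <;> simp [h]
  · intro a
    by_cases h : a ∈ s <;> simp [h, p.apply_ne_top a]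

lemma probEvent_compl_toReal (p : PMF α) (s : Set α) :
    (probEvent p sᶜ).toReal = 1 - (probEvent p s).toReal := by
  have hp := p.summable_toReal
  rw [eq_sub_iff_add_eq, probEvent_toReal, probEvent_toReal,
    ← (hp.indicator sᶜ).tsum_add (hp.indicator s), ← p.tsum_toReal]
  congr 1 with a
  by_cases h : a ∈ s <;> simp [h]

lemma probEvent_bind_le {p : PMF α} {f : α → PMF β} {s : Set β} {c : ℝ≥0∞}
    (h : ∀ a ∈ p.support, probEvent (f a) s ≤ c) : probEvent (p.bind f) s ≤ c := by
  rw [probEvent, PMF.toOuterMeasure_bind_apply]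
  calc ∑' a, p a * (f a).toOuterMeasure s ≤ ∑' a, p a * c := by
        refine ENNReal.tsum_le_tsum fun a => ?_
        by_cases ha : a ∈ p.support
        · exact mul_le_mul_right (h a ha) _
        · simp [PMF.apply_eq_zero_iff _ _ |>.mpr ha]
    _ = c := by rw [ENNReal.tsum_mul_right, p.tsum_coe, one_mul]

end Probability

section TotalVariation

variable {α : Type*}

lemma tv_comm (p q : PMF α) : tv p q = tv q p := by
  simp only [tv, abs_sub_comm]

lemma tv_triangle (p q r : PMF α) : tv p r ≤ tv p q + tv q r := by
  have hpq := (p.summable_toReal.sub q.summable_toReal).abs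
  have hqr := (q.summable_toReal.sub r.summable_toReal).abs
  have h := (p.summable_toReal.sub r.summable_toReal).abs.tsum_le_tsum
    (fun a => abs_sub_le _ ((q a).toReal) _) (hpq.add hqr)
  rw [hpq.tsum_add hqr] at h
  simp only [tv]
  linarith

lemma sub_le_tv (p q : PMF α) (s : Set α) :
    (probEvent p s).toReal - (probEvent q s).toReal ≤ tv p q := by
  set d : α → ℝ := fun a => (p a).toReal - (q a).toReal with hd_def
  have hd : Summable d := p.summable_toReal.sub q.summable_toReal
  have hd_sum : ∑' a, d a = 0 := by
    rw [hd_def, p.summable_toReal.tsum_sub q.summable_toReal, p.tsum_toReal, q.tsum_toReal,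
      sub_self]
  have h_pos : ∀ a, s.indicator d a ≤ (d a + |d a|) / 2 := by
    intro a
    by_cases h : a ∈ s
    · simp only [Set.indicator_of_mem h]
      linarith [le_abs_self (d a)]
    · simp only [Set.indicator_of_notMem h]
      linarith [neg_abs_le (d a)]
  calc (probEvent p s).toReal - (probEvent q s).toReal = ∑' a, s.indicator d a := by
        rw [probEvent_toReal, probEvent_toReal,
          ← (p.summable_toReal.indicator s).tsum_sub (q.summable_toReal.indicator s)]
        congr 1 with a
        by_cases h : a ∈ s <;> simp [h, d]
    _ ≤ ∑' a, (d a + |d a|) / 2 :=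
        (hd.indicator s).tsum_le_tsum h_pos ((hd.add hd.abs).div_const 2)
    _ = tv p q := by rw [tsum_div_const, hd.tsum_add hd.abs, hd_sum, zero_add, tv]

lemma lt_tv_of_tv_le {p q r : PMF α} {γ : ℝ} (hpq : γ < tv p q) (hr : tv r p ≤ γ / 2) :
    γ / 2 < tv r q := by
  linarith [tv_triangle p r q, tv_comm p r]

lemma one_sub_two_mul_lt_tv {p q : PMF α} {s : Set α} {θ : ℝ}
    (hp : probEvent p s ≤ ENNReal.ofReal θ) (hq : probEvent q sᶜ < ENNReal.ofReal θ) :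
    1 - 2 * θ < tv p q := by
  have hθ : 0 < θ := ENNReal.ofReal_pos.mp (pos_of_gt hq)
  have hq' := ENNReal.toReal_lt_of_lt_ofReal hq
  have hp' := ENNReal.toReal_le_of_le_ofReal hθ.le hp
  rw [probEvent_compl_toReal] at hq'
  linarith [sub_le_tv q p s, tv_comm p q]

end TotalVariation

theorem stmt5_general {X : Type*} (C1 C2 : Set (PMF X)) (γ : ℝ)
    (hsep : ∀ q ∈ C1, ∀ p ∈ C2, γ < tv p q)
    (m : ℕ) (Q : PMF (PMF X)) (hQ : Q.support ⊆ C1)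
    (p : PMF X) (hp : p ∈ C2) (ζ : ℝ)
    (hclose : tv (metaSample Q m) (iid p m) < ζ) :
    ∀ A : Multiset X → PMF X, ∃ r ∈ C1 ∪ C2,
      ENNReal.ofReal (1 / 2 - ζ / 2) ≤ probEvent (iid r m) {S | γ / 2 < tv (A S) r} := by
  intro A
  by_contra! hfail
  set close : Set (Multiset X) := {S | γ / 2 < tv (A S) p}ᶜ
  have hQ_close : probEvent (metaSample Q m) close ≤ ENNReal.ofReal (1 / 2 - ζ / 2) :=
    probEvent_bind_le fun q hq =>
      (probEvent_mono _ fun S hS => lt_tv_of_tv_le (hsep q (hQ hq) p hp) (not_lt.mp hS)).trans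
        (hfail q (Or.inl (hQ hq))).le
  have hp_close : probEvent (iid p m) closeᶜ < ENNReal.ofReal (1 / 2 - ζ / 2) := by
    rw [compl_compl]
    exact hfail p (Or.inr hp)
  linarith [one_sub_two_mul_lt_tv hQ_close hp_close]

/-- (Lemma 4 of the cited work.) If all of `C1` is `γ`-far from all of `C2`
in TV distance, and some meta-distribution `Q` over `C1` and some `p ∈ C2` satisfy
`d_TV(|Q|^m, p^m) < ζ` with `ζ ∈ (0, 1/2)`, then every learner `A` fails on some
`r ∈ C1 ∪ C2`. -/
theorem stmt5 {X : Type*} (C1 C2 : Set (PMF X)) (γ : ℝ)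
    (hsep : ∀ q ∈ C1, ∀ p ∈ C2, γ < tv p q)
    (m : ℕ) (Q : PMF (PMF X)) (hQ : Q.support ⊆ C1)
    (p : PMF X) (hp : p ∈ C2) (ζ : ℝ) (hζ : ζ ∈ Set.Ioo (0 : ℝ) (1 / 2))
    (hclose : tv (metaSample Q m) (iid p m) < ζ) :
    ∀ A : Multiset X → PMF X, ∃ r ∈ C1 ∪ C2,
      ENNReal.ofReal (1 / 2 - ζ / 2) ≤ probEvent (iid r m) {S | γ / 2 < tv (A S) r} :=
  stmt5_general C1 C2 γ hsep m Q hQ p hp ζ hclose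
end

section
/- Let C be a class of distributions on a countable domain X, let α ≥ 1, and let V_sub be a subtractive adaptive adversary with fixed constant budget η. If there exist constants γ', ζ ∈ (0, 1/2) such that for every m ∈ ℕ the adversary V_sub successfully (4αη + 4γ', ζ)-confuses C-generated samples of size m, then there exists an adaptive additive adversary V_{add,2} (with fixed constant budget at most 2η) that is a universal α-adversary for C. -/
open scoped ENNReal NNReal

/-
Write `P = p^m` and `P' = |Q|^m` for the sample laws that `V_sub` confuses. Given `S`, the
additive adversary looks at the sample `T ∼ V_sub(S)` that would be kept and adds to `S` a fresh
draw `D'` from the even mixture of the two posteriors (under `P` and under `P'`) of the removed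
points given `T`, padded up to budget `2η`. As `S = T + D` with `D` from the posterior under the
true law, the output is `T + D + D'`: given `T`, the laws under `P` and under `P'` are even
mixtures sharing the component "one draw from each posterior", so they are `1/2`-close, and the
two corrupted laws are `(1/2 + ζ)`-close. A learner with error `2αη + γ'` and confidence `1 - δ`
would however tell them apart with probability `1 - 2δ`, because every `q` in the support of `Q`
is more than `2(2αη + γ')` away from `p`; this is absurd for `δ = (1/2 - ζ)/4`.
-/

lemma ENNReal.tsum_sub_tsum_le_tsum_sub {β : Type*} (f g : β → ℝ≥0∞) :
    ∑' b, f b - ∑' b, g b ≤ ∑' b, (f b - g b) := by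
  rw [tsub_le_iff_right, ← ENNReal.tsum_add]
  exact ENNReal.tsum_le_tsum fun b => le_tsub_add

namespace PMF

variable {β γ δ : Type*}

lemma bind_congr_of_mem_support (P : PMF β) {f g : β → PMF γ}
    (h : ∀ b ∈ P.support, f b = g b) : P.bind f = P.bind g := by
  ext c
  simp only [bind_apply]
  refine tsum_congr fun b => ?_
  by_cases hb : P b = 0
  · simp [hb]
  · rw [h b ((mem_support_iff P b).2 hb)]

noncomputable def etv (P Q : PMF β) : ℝ≥0∞ := ∑' b, (P b - Q b)

lemma etv_le_one (P Q : PMF β) : P.etv Q ≤ 1 :=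
  (ENNReal.tsum_le_tsum fun _ => tsub_le_self).trans_eq P.tsum_coe

lemma etv_ne_top (P Q : PMF β) : P.etv Q ≠ ∞ :=
  ne_top_of_le_ne_top ENNReal.one_ne_top (P.etv_le_one Q)

lemma etv_add_tsum_min (P Q : PMF β) : P.etv Q + ∑' b, min (P b) (Q b) = 1 := by
  rw [etv, ← ENNReal.tsum_add, ← P.tsum_coe]
  exact tsum_congr fun b => tsub_add_min

lemma etv_comm (P Q : PMF β) : P.etv Q = Q.etv P := by
  have hmin : ∑' b, min (P b) (Q b) ≠ ∞ :=
    ne_top_of_le_ne_top ENNReal.one_ne_top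
      ((ENNReal.tsum_le_tsum fun b => min_le_left _ _).trans_eq P.tsum_coe)
  have h := (P.etv_add_tsum_min Q).trans (Q.etv_add_tsum_min P).symm
  simp_rw [min_comm (Q _)] at h
  exact (ENNReal.add_left_inj hmin).1 h

lemma etv_triangle (P Q R : PMF β) : P.etv R ≤ P.etv Q + Q.etv R := by
  rw [etv, etv, etv, ← ENNReal.tsum_add]
  exact ENNReal.tsum_le_tsum fun b => tsub_le_tsub_add_tsub

lemma etv_bind_le_of_forall (P : PMF β) {f g : β → PMF γ} {r : ℝ≥0∞}
    (h : ∀ b ∈ P.support, (f b).etv (g b) ≤ r) : (P.bind f).etv (P.bind g) ≤ r := by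
  calc (P.bind f).etv (P.bind g) ≤ ∑' c, ∑' b, P b * (f b c - g b c) := by
        refine ENNReal.tsum_le_tsum fun c => ?_
        simp only [bind_apply]
        refine (ENNReal.tsum_sub_tsum_le_tsum_sub _ _).trans (ENNReal.tsum_le_tsum fun b => ?_)
        rw [ENNReal.mul_sub fun _ _ => P.apply_ne_top b]
    _ = ∑' b, P b * (f b).etv (g b) := by
        rw [ENNReal.tsum_comm]
        simp only [etv, ENNReal.tsum_mul_left]
    _ ≤ ∑' b, P b * r := by
        refine ENNReal.tsum_le_tsum fun b => ?_
        by_cases hb : P b = 0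
        · simp [hb]
        · gcongr
          exact h b ((mem_support_iff P b).2 hb)
    _ = r := by rw [ENNReal.tsum_mul_right, P.tsum_coe, one_mul]

lemma etv_bind_le_etv (P Q : PMF β) (f : β → PMF γ) : (P.bind f).etv (Q.bind f) ≤ P.etv Q := by
  calc (P.bind f).etv (Q.bind f) ≤ ∑' c, ∑' b, (P b - Q b) * f b c := by
        refine ENNReal.tsum_le_tsum fun c => ?_
        simp only [bind_apply]
        refine (ENNReal.tsum_sub_tsum_le_tsum_sub _ _).trans (ENNReal.tsum_le_tsum fun b => ?_)
        rw [ENNReal.sub_mul fun _ _ => (f b).apply_ne_top c]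
    _ = P.etv Q := by
        rw [ENNReal.tsum_comm]
        simp only [etv, ENNReal.tsum_mul_left, tsum_coe, mul_one]

noncomputable def halfMix (A B : PMF β) : PMF β :=
  (uniformOfFintype Bool).bind fun t => cond t A B

lemma halfMix_apply (A B : PMF β) (b : β) : halfMix A B b = 2⁻¹ * A b + 2⁻¹ * B b := by
  simp [halfMix, bind_apply, uniformOfFintype_apply]

lemma halfMix_bind (A B : PMF β) (f : β → PMF γ) :
    (halfMix A B).bind f = halfMix (A.bind f) (B.bind f) := by
  rw [halfMix, halfMix, bind_bind]
  congr 1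
  ext t : 1
  cases t <;> rfl

lemma bind_halfMix (P : PMF β) (f g : β → PMF γ) :
    P.bind (fun b => halfMix (f b) (g b)) = halfMix (P.bind f) (P.bind g) := by
  simp only [halfMix]
  rw [bind_comm]
  congr 1
  ext t : 1
  cases t <;> rfl

lemma etv_halfMix_halfMix_le (A B C : PMF β) : (halfMix A B).etv (halfMix B C) ≤ 2⁻¹ := by
  calc (halfMix A B).etv (halfMix B C) ≤ ∑' b, 2⁻¹ * A b := by
        refine ENNReal.tsum_le_tsum fun b => ?_
        rw [halfMix_apply, halfMix_apply, tsub_le_iff_right]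
        gcongr
        exact le_self_add
    _ = 2⁻¹ := by rw [ENNReal.tsum_mul_left, A.tsum_coe, mul_one]

-- Both sides are even mixtures sharing the component `A.bind fun a => B.bind (h a)`.
lemma etv_bind_halfMix_le (A B : PMF β) (h : β → β → PMF γ) (hh : ∀ a b, h a b = h b a) :
    (A.bind fun a => (halfMix A B).bind (h a)).etv (B.bind fun a => (halfMix A B).bind (h a))
      ≤ 2⁻¹ := by
  have hswap : (B.bind fun a => A.bind (h a)) = A.bind fun a => B.bind (h a) := by
    rw [bind_comm]
    simp_rw [hh]
  simp_rw [halfMix_bind, bind_halfMix, hswap]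
  exact etv_halfMix_halfMix_le _ _ _

lemma tsum_apply_mk_ne_top (J : PMF (β × γ)) (b : β) : ∑' c, J (b, c) ≠ ∞ :=
  ne_top_of_le_ne_top ENNReal.one_ne_top
    ((ENNReal.tsum_comp_le_tsum_of_injective (Prod.mk_right_injective b) J).trans_eq J.tsum_coe)

-- On a null fibre the second marginal is used, so that supports stay inside that of `J`.
noncomputable def condFst (J : PMF (β × γ)) (b : β) : PMF γ :=
  if h : ∑' c, J (b, c) = 0 then J.map Prod.snd
  else normalize (fun c => J (b, c)) h (J.tsum_apply_mk_ne_top b)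

lemma map_fst_apply (J : PMF (β × γ)) (b : β) : J.map Prod.fst b = ∑' c, J (b, c) := by
  classical
  rw [map_apply, ENNReal.tsum_prod', tsum_eq_single b fun b' hb' => by simp [Ne.symm hb']]
  simp

lemma bind_map_fst_condFst (J : PMF (β × γ)) :
    (J.map Prod.fst).bind (fun b => (J.condFst b).map (Prod.mk b)) = J := by
  classical
  ext ⟨b, c⟩
  rw [bind_apply, tsum_eq_single b]
  · rw [map_fst_apply, condFst]
    split_ifs with h
    · simp [ENNReal.tsum_eq_zero.1 h]
    · simp only [map_apply, normalize_apply, Prod.mk.injEq, true_and]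
      rw [tsum_eq_single c fun c' hc' => if_neg (Ne.symm hc'), if_pos rfl, mul_left_comm,
        ENNReal.mul_inv_cancel h (J.tsum_apply_mk_ne_top b), mul_one]
  · intro b' hb'
    simp [map_apply, hb'.symm]

lemma bind_eq_bind_condFst (J : PMF (β × γ)) (g : β × γ → PMF δ) :
    J.bind g = (J.map Prod.fst).bind fun b => (J.condFst b).bind fun c => g (b, c) := by
  conv_lhs => rw [← J.bind_map_fst_condFst]
  simp only [bind_bind, bind_map, Function.comp_def]

lemma exists_mem_support_of_mem_support_condFst {J : PMF (β × γ)} {b : β} {c : γ}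
    (hc : c ∈ (J.condFst b).support) : ∃ b', (b', c) ∈ J.support := by
  rw [condFst] at hc
  split_ifs at hc with h
  · obtain ⟨x, hx, rfl⟩ := (mem_support_map_iff _ _ _).1 hc
    exact ⟨x.1, hx⟩
  · exact ⟨b, (mem_support_normalize_iff (f := fun c => J (b, c)) _ _ _).1 hc⟩

end PMF

section TotalVariation

variable {β : Type*}

open PMF

lemma tv_eq_toReal_etv (P Q : PMF β) : tv P Q = (P.etv Q).toReal := by
  have habs : ∀ b, |(P b).toReal - (Q b).toReal| = ((P b - Q b) + (Q b - P b)).toReal := by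
    intro b
    rcases le_total (P b) (Q b) with h | h
    · rw [tsub_eq_zero_of_le h, zero_add, abs_sub_comm, abs_of_nonneg
        (sub_nonneg.2 (ENNReal.toReal_mono (Q.apply_ne_top b) h)),
        ENNReal.toReal_sub_of_le h (Q.apply_ne_top b)]
    · rw [tsub_eq_zero_of_le h, add_zero, abs_of_nonneg
        (sub_nonneg.2 (ENNReal.toReal_mono (P.apply_ne_top b) h)),
        ENNReal.toReal_sub_of_le h (P.apply_ne_top b)]
  have hfin : ∀ b, (P b - Q b) + (Q b - P b) ≠ ∞ := fun b =>
    ENNReal.add_ne_top.2 ⟨ne_top_of_le_ne_top (P.apply_ne_top b) tsub_le_self,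
      ne_top_of_le_ne_top (Q.apply_ne_top b) tsub_le_self⟩
  rw [tv, tsum_congr habs, ← ENNReal.tsum_toReal_eq hfin, ENNReal.tsum_add]
  change (P.etv Q + Q.etv P).toReal / 2 = _
  rw [etv_comm Q P, ENNReal.toReal_add (P.etv_ne_top Q) (P.etv_ne_top Q)]
  ring

lemma tv_comm_s11 (P Q : PMF β) : tv P Q = tv Q P := by
  rw [tv_eq_toReal_etv, tv_eq_toReal_etv, etv_comm]

lemma tv_triangle_s11 (P Q R : PMF β) : tv P R ≤ tv P Q + tv Q R := by
  simp only [tv_eq_toReal_etv]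
  rw [← ENNReal.toReal_add (P.etv_ne_top Q) (Q.etv_ne_top R)]
  exact ENNReal.toReal_mono (ENNReal.add_ne_top.2 ⟨P.etv_ne_top Q, Q.etv_ne_top R⟩)
    (etv_triangle P Q R)

lemma probEvent_le_probEvent_add_etv (P Q : PMF β) (E : Set β) :
    probEvent P E ≤ probEvent Q E + P.etv Q := by
  rw [← tsub_le_iff_left, probEvent, probEvent, toOuterMeasure_apply, toOuterMeasure_apply]
  refine (ENNReal.tsum_sub_tsum_le_tsum_sub _ _).trans (ENNReal.tsum_le_tsum fun b => ?_)
  by_cases hb : b ∈ E <;> simp [hb]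

lemma probEvent_add_probEvent_le_one (P : PMF β) {E F : Set β} (h : Disjoint E F) :
    probEvent P E + probEvent P F ≤ 1 := by
  rw [probEvent, probEvent, toOuterMeasure_apply, toOuterMeasure_apply, ← ENNReal.tsum_add,
    ← P.tsum_coe]
  refine ENNReal.tsum_le_tsum fun b => ?_
  simpa only [Set.indicator_union_of_disjoint h] using Set.indicator_le_self (E ∪ F) P b

end TotalVariation

lemma card_of_mem_support_iid {X : Type*} {p : PMF X} {n : ℕ} {S : Multiset X}
    (hS : S ∈ (iid p n).support) : Multiset.card S = n := by
  induction n generalizing S with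
  | zero => simp_all [iid]
  | succ n ih =>
    obtain ⟨s, hs, hS⟩ := (PMF.mem_support_bind_iff _ _ _).1 hS
    obtain ⟨x, -, rfl⟩ := (PMF.mem_support_map_iff _ _ _).1 hS
    simp [ih hs]

lemma card_of_mem_support_metaSample {X : Type*} {Q : PMF (PMF X)} {n : ℕ} {S : Multiset X}
    (hS : S ∈ (metaSample Q n).support) : Multiset.card S = n := by
  obtain ⟨q, -, hS⟩ := (PMF.mem_support_bind_iff _ _ _).1 hS
  exact card_of_mem_support_iid hS

section AdditiveAdversary

variable {X β : Type*} [DecidableEq X] {V : Adversary X}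

noncomputable def keptRemoved (V : Adversary X) (P : PMF (Multiset X)) :
    PMF (Multiset X × Multiset X) :=
  P.bind fun S => (V S).map fun T => (T, S - T)

lemma map_fst_keptRemoved (V : Adversary X) (P : PMF (Multiset X)) :
    (keptRemoved V P).map Prod.fst = P.bind V := by
  simp only [keptRemoved, PMF.map_bind, PMF.map_comp, Function.comp_def]
  exact congrArg P.bind (funext fun S => PMF.map_id (V S))

noncomputable def removedGiven (V : Adversary X) (P : PMF (Multiset X)) (T : Multiset X) :
    PMF (Multiset X) :=
  (keptRemoved V P).condFst T

lemma card_of_mem_support_removedGiven (hV : IsSubtractive V) {c : ℕ → ℕ}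
    (hc : ∀ S T, T ∈ (V S).support → Multiset.card T = c (Multiset.card S))
    {P : PMF (Multiset X)} {n : ℕ} (hP : ∀ S ∈ P.support, Multiset.card S = n)
    {T D : Multiset X} (hD : D ∈ (removedGiven V P T).support) :
    Multiset.card D = n - c n := by
  obtain ⟨T₀, hT₀⟩ := PMF.exists_mem_support_of_mem_support_condFst hD
  obtain ⟨S, hS, hT₀⟩ := (PMF.mem_support_bind_iff _ _ _).1 hT₀
  obtain ⟨T', hT', hTD⟩ := (PMF.mem_support_map_iff _ _ _).1 hT₀
  obtain ⟨rfl, rfl⟩ := Prod.mk.inj hTD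
  rw [Multiset.card_sub (hV S T' hT'), hc S T' hT', hP S hS]

lemma bind_bind_eq_bind_removedGiven (hV : IsSubtractive V) (P : PMF (Multiset X))
    (k : Multiset X → Multiset X → PMF β) :
    (P.bind fun S => (V S).bind fun T => k T S) =
      (P.bind V).bind fun T => (removedGiven V P T).bind fun D => k T (T + D) := by
  simp only [removedGiven]
  rw [← map_fst_keptRemoved, ← PMF.bind_eq_bind_condFst _ fun x => k x.1 (x.1 + x.2),
    keptRemoved, PMF.bind_bind]
  refine PMF.bind_congr_of_mem_support _ fun S _ => ?_
  rw [PMF.bind_map]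
  refine PMF.bind_congr_of_mem_support _ fun T hT => ?_
  simp only [Function.comp_apply, add_tsub_cancel_of_le (hV S T hT)]

noncomputable def addAdversary (V : Adversary X) (P₁ P₂ : ℕ → PMF (Multiset X)) (k : ℕ → ℕ)
    (x₀ : X) : Adversary X := fun S =>
  (V S).bind fun T =>
    (PMF.halfMix (removedGiven V (P₁ (Multiset.card S)) T)
      (removedGiven V (P₂ (Multiset.card S)) T)).bind fun D =>
        PMF.pure (S + D + Multiset.replicate (k (Multiset.card S)) x₀)

variable {P₁ P₂ : ℕ → PMF (Multiset X)} {k : ℕ → ℕ} {x₀ : X}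

lemma isAdditive_addAdversary : IsAdditive (addAdversary V P₁ P₂ k x₀) := by
  intro S S' hS'
  obtain ⟨T, -, hS'⟩ := (PMF.mem_support_bind_iff _ _ _).1 hS'
  obtain ⟨D, -, hS'⟩ := (PMF.mem_support_bind_iff _ _ _).1 hS'
  rw [PMF.support_pure, Set.mem_singleton_iff] at hS'
  rw [hS', add_assoc]
  exact Multiset.le_add_right _ _

lemma card_of_mem_support_addAdversary (hV : IsSubtractive V) {c : ℕ → ℕ}
    (hc : ∀ S T, T ∈ (V S).support → Multiset.card T = c (Multiset.card S))
    (hP₁ : ∀ n, ∀ S ∈ (P₁ n).support, Multiset.card S = n)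
    (hP₂ : ∀ n, ∀ S ∈ (P₂ n).support, Multiset.card S = n) {S S' : Multiset X}
    (hS' : S' ∈ (addAdversary V P₁ P₂ k x₀ S).support) :
    Multiset.card S' =
      Multiset.card S + (Multiset.card S - c (Multiset.card S)) + k (Multiset.card S) := by
  obtain ⟨T, -, hS'⟩ := (PMF.mem_support_bind_iff _ _ _).1 hS'
  obtain ⟨D, hD, hS'⟩ := (PMF.mem_support_bind_iff _ _ _).1 hS'
  obtain ⟨b, -, hD⟩ := (PMF.mem_support_bind_iff _ _ _).1 hD
  rw [PMF.support_pure, Set.mem_singleton_iff] at hS'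
  have hcardD : Multiset.card D = Multiset.card S - c (Multiset.card S) := by
    cases b
    · exact card_of_mem_support_removedGiven hV hc (hP₂ _) hD
    · exact card_of_mem_support_removedGiven hV hc (hP₁ _) hD
  rw [hS', Multiset.card_add, Multiset.card_add, hcardD, Multiset.card_replicate]

lemma bind_addAdversary (hV : IsSubtractive V) {P : PMF (Multiset X)} {n : ℕ}
    (hP : ∀ S ∈ P.support, Multiset.card S = n) :
    P.bind (addAdversary V P₁ P₂ k x₀) = (P.bind V).bind fun T =>
      (removedGiven V P T).bind fun D =>
        (PMF.halfMix (removedGiven V (P₁ n) T) (removedGiven V (P₂ n) T)).bind fun D' =>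
          PMF.pure (T + D + D' + Multiset.replicate (k n) x₀) := by
  rw [← bind_bind_eq_bind_removedGiven hV P fun T S =>
    (PMF.halfMix (removedGiven V (P₁ n) T) (removedGiven V (P₂ n) T)).bind fun D' =>
      PMF.pure (S + D' + Multiset.replicate (k n) x₀)]
  refine PMF.bind_congr_of_mem_support _ fun S hS => ?_
  simp only [addAdversary, hP S hS]

lemma etv_bind_addAdversary_le (hV : IsSubtractive V)
    (hP₁ : ∀ n, ∀ S ∈ (P₁ n).support, Multiset.card S = n)
    (hP₂ : ∀ n, ∀ S ∈ (P₂ n).support, Multiset.card S = n) (n : ℕ) :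
    ((P₁ n).bind (addAdversary V P₁ P₂ k x₀)).etv ((P₂ n).bind (addAdversary V P₁ P₂ k x₀))
      ≤ 2⁻¹ + ((P₁ n).bind V).etv ((P₂ n).bind V) := by
  set kernel : PMF (Multiset X) → Multiset X → PMF (Multiset X) := fun P T =>
    (removedGiven V P T).bind fun D =>
      (PMF.halfMix (removedGiven V (P₁ n) T) (removedGiven V (P₂ n) T)).bind fun D' =>
        PMF.pure (T + D + D' + Multiset.replicate (k n) x₀)
  rw [bind_addAdversary hV (hP₁ n), bind_addAdversary hV (hP₂ n)]
  refine (PMF.etv_triangle _ (((P₁ n).bind V).bind (kernel (P₂ n))) _).trans (add_le_add ?_ ?_)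
  · refine PMF.etv_bind_le_of_forall _ fun T _ => PMF.etv_bind_halfMix_le _ _ _ fun D D' => ?_
    rw [add_right_comm T]
  · exact PMF.etv_bind_le_etv _ _ _

lemma tv_bind_addAdversary_le (hV : IsSubtractive V)
    (hP₁ : ∀ n, ∀ S ∈ (P₁ n).support, Multiset.card S = n)
    (hP₂ : ∀ n, ∀ S ∈ (P₂ n).support, Multiset.card S = n) (n : ℕ) :
    tv ((P₁ n).bind (addAdversary V P₁ P₂ k x₀)) ((P₂ n).bind (addAdversary V P₁ P₂ k x₀))
      ≤ 1 / 2 + tv ((P₁ n).bind V) ((P₂ n).bind V) := by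
  rw [tv_eq_toReal_etv, tv_eq_toReal_etv]
  calc _ ≤ (2⁻¹ + ((P₁ n).bind V).etv ((P₂ n).bind V)).toReal :=
        ENNReal.toReal_mono (ENNReal.add_ne_top.2 ⟨by norm_num, PMF.etv_ne_top _ _⟩)
          (etv_bind_addAdversary_le hV hP₁ hP₂ n)
    _ = 1 / 2 + (((P₁ n).bind V).etv ((P₂ n).bind V)).toReal := by
        rw [ENNReal.toReal_add (by norm_num) (PMF.etv_ne_top _ _)]
        norm_num

end AdditiveAdversary

lemma sub_le_floor_mul_of_cast_sub_le {m c : ℕ} {η η' : ℝ} (h : (m : ℝ) - c ≤ η * m)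
    (hη : η ≤ η') : m - c ≤ ⌊η' * m⌋₊ := by
  rcases le_total m c with hmc | hcm
  · simp [Nat.sub_eq_zero_of_le hmc]
  · refine Nat.le_floor ?_
    rw [Nat.cast_sub hcm]
    exact h.trans (mul_le_mul_of_nonneg_right hη m.cast_nonneg)

lemma fixedBudgetAdd_of_card_eq {X : Type*} {V : Adversary X} {η : ℝ} (hη : 0 ≤ η)
    (hV : ∀ S T, T ∈ (V S).support →
      Multiset.card T = Multiset.card S + ⌊η * Multiset.card S⌋₊) :
    FixedBudgetAdd V η := by
  refine ⟨fun n => n + ⌊η * n⌋₊, hV, fun n => ?_⟩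
  push_cast
  have hlt := Nat.sub_one_lt_floor (η * n)
  have hle := Nat.floor_le (mul_nonneg hη n.cast_nonneg)
  constructor <;> linarith

section Learner

variable {X : Type*} {C : Set (PMF X)} {A : Multiset X → PMF X} {mc : ℝ → ℝ → ℕ}
  {V : Adversary X} {b ε δ : ℝ}

lemma probEvent_bind_metaSample_le (hA : RobustLearnerFor C A mc V b)
    (hε : ε ∈ Set.Ioo (0 : ℝ) 1) (hδ : δ ∈ Set.Ioo (0 : ℝ) 1) {p : PMF X} {Q : PMF (PMF X)}
    (hQ : Q.support ⊆ C) (hfar : ∀ q ∈ Q.support, 2 * (b + ε) < tv p q) :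
    probEvent ((metaSample Q (mc ε δ)).bind V) {T | tv (A T) p ≤ b + ε} ≤ ENNReal.ofReal δ := by
  set E := {T | tv (A T) p ≤ b + ε}
  have hfar_event : ∀ q ∈ Q.support,
      probEvent ((iid q (mc ε δ)).bind V) E ≤ ENNReal.ofReal δ := by
    intro q hq
    have hdisj : Disjoint E {T | tv (A T) q ≤ b + ε} := by
      refine Set.disjoint_left.2 fun T hTp hTq => (hfar q hq).not_ge ?_
      have hTp : tv (A T) p ≤ b + ε := hTp
      have hTq : tv (A T) q ≤ b + ε := hTq
      have := tv_triangle_s11 p (A T) q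
      rw [tv_comm_s11 p (A T)] at this
      linarith
    have hsum := probEvent_add_probEvent_le_one ((iid q (mc ε δ)).bind V) hdisj
    calc probEvent ((iid q (mc ε δ)).bind V) E
        ≤ 1 - probEvent ((iid q (mc ε δ)).bind V) {T | tv (A T) q ≤ b + ε} :=
          ENNReal.le_sub_of_add_le_right
            (ne_top_of_le_ne_top ENNReal.one_ne_top (le_add_self.trans hsum)) hsum
      _ ≤ 1 - (1 - ENNReal.ofReal δ) := by
          gcongr
          exact hA q (hQ hq) ε δ hε.1 hε.2 hδ.1 hδ.2 _ le_rfl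
      _ ≤ ENNReal.ofReal δ := tsub_tsub_le
  rw [metaSample, PMF.bind_bind, probEvent, PMF.toOuterMeasure_bind_apply]
  calc ∑' q, Q q * ((iid q (mc ε δ)).bind V).toOuterMeasure E
      ≤ ∑' q, Q q * ENNReal.ofReal δ := by
        refine ENNReal.tsum_le_tsum fun q => ?_
        by_cases hq : Q q = 0
        · simp [hq]
        · gcongr
          exact hfar_event q ((Q.mem_support_iff q).2 hq)
    _ = ENNReal.ofReal δ := by rw [ENNReal.tsum_mul_right, Q.tsum_coe, one_mul]

lemma one_sub_two_mul_le_tv_of_robustLearnerFor (hA : RobustLearnerFor C A mc V b)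
    (hε : ε ∈ Set.Ioo (0 : ℝ) 1) (hδ : δ ∈ Set.Ioo (0 : ℝ) 1) {p : PMF X} (hp : p ∈ C)
    {Q : PMF (PMF X)} (hQ : Q.support ⊆ C) (hfar : ∀ q ∈ Q.support, 2 * (b + ε) < tv p q) :
    1 - 2 * δ ≤ tv ((iid p (mc ε δ)).bind V) ((metaSample Q (mc ε δ)).bind V) := by
  set P := (iid p (mc ε δ)).bind V
  set P' := (metaSample Q (mc ε δ)).bind V
  set E := {T | tv (A T) p ≤ b + ε}
  have h : 1 ≤ P.etv P' + ENNReal.ofReal δ + ENNReal.ofReal δ :=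
    calc 1 ≤ (1 - ENNReal.ofReal δ) + ENNReal.ofReal δ := le_tsub_add
      _ ≤ probEvent P E + ENNReal.ofReal δ := by
          gcongr
          exact hA p hp ε δ hε.1 hε.2 hδ.1 hδ.2 _ le_rfl
      _ ≤ (probEvent P' E + P.etv P') + ENNReal.ofReal δ := by
          gcongr
          exact probEvent_le_probEvent_add_etv P P' E
      _ ≤ P.etv P' + ENNReal.ofReal δ + ENNReal.ofReal δ := by
          rw [add_comm (probEvent P' E)]
          gcongr
          exact probEvent_bind_metaSample_le hA hε hδ hQ hfar
  have hfin : P.etv P' + ENNReal.ofReal δ ≠ ∞ :=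
    ENNReal.add_ne_top.2 ⟨P.etv_ne_top P', ENNReal.ofReal_ne_top⟩
  have h' := ENNReal.toReal_mono (ENNReal.add_ne_top.2 ⟨hfin, ENNReal.ofReal_ne_top⟩) h
  rw [ENNReal.toReal_add hfin ENNReal.ofReal_ne_top, ENNReal.toReal_add
    (P.etv_ne_top P') ENNReal.ofReal_ne_top, ENNReal.toReal_ofReal hδ.1.le] at h'
  rw [tv_eq_toReal_etv]
  norm_num at h'
  linarith

end Learner

theorem stmt11_general {X : Type*} (C : Set (PMF X)) (α : ℝ)
    (Vs : Adversary X) (hVs : IsSubtractive Vs) (η : ℝ) (hη : η ∈ Set.Ioo (0 : ℝ) 1)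
    (hb : FixedBudgetSub Vs η)
    (γ' ζ : ℝ) (hγ' : γ' ∈ Set.Ioo (0 : ℝ) (1 / 2)) (hζ : ζ ∈ Set.Ioo (0 : ℝ) (1 / 2))
    (hconf : ∀ m : ℕ, Confuses C Vs (4 * α * η + 4 * γ') ζ m) :
    ∃ (Vadd : Adversary X) (η' : ℝ), IsAdditive Vadd ∧ 0 < η' ∧ η' ≤ 2 * η ∧
      FixedBudgetAdd Vadd η' ∧ UniversalAdversary C α Vadd η' := by
  classical
  obtain ⟨c, hcard, hc⟩ := hb
  choose p hpC Q hQC hfar hclose using hconf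
  obtain ⟨x₀, -⟩ := (p 0).support_nonempty
  have hP₁ (n : ℕ) (S) (hS : S ∈ (iid (p n) n).support) := card_of_mem_support_iid hS
  have hP₂ (n : ℕ) (S) (hS : S ∈ (metaSample (Q n) n).support) :=
    card_of_mem_support_metaSample hS
  set Vadd := addAdversary Vs (fun n => iid (p n) n) (fun n => metaSample (Q n) n)
    (fun n => ⌊2 * η * n⌋₊ - (n - c n)) x₀
  refine ⟨Vadd, 2 * η, isAdditive_addAdversary, by linarith [hη.1], le_rfl, ?_, ?_⟩
  · refine fixedBudgetAdd_of_card_eq (by linarith [hη.1]) fun S T hT => ?_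
    have hT := card_of_mem_support_addAdversary hVs hcard hP₁ hP₂ hT
    have hpad := sub_le_floor_mul_of_cast_sub_le (hc (Multiset.card S)).2
      (show η ≤ 2 * η by linarith [hη.1])
    omega
  · rintro ⟨A, mc, hA⟩
    have hδ : (1 / 2 - ζ) / 4 ∈ Set.Ioo (0 : ℝ) 1 := ⟨by linarith [hζ.2], by linarith [hζ.1]⟩
    set m := mc γ' ((1 / 2 - ζ) / 4)
    have hlow := one_sub_two_mul_le_tv_of_robustLearnerFor hA
      ⟨hγ'.1, by linarith [hγ'.2]⟩ hδ (hpC m) (hQC m) fun q hq => by linarith [hfar m q hq, hγ'.1]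
    have hup := tv_bind_addAdversary_le (k := fun n => ⌊2 * η * n⌋₊ - (n - c n)) (x₀ := x₀)
      hVs hP₁ hP₂ m
    have hclose := hclose m
    rw [advPush, advPush, tv_comm_s11] at hclose
    linarith [hζ.2]

/-- If a subtractive adaptive adversary `V_sub` with fixed constant budget
`η` successfully `(4αη + 4γ', ζ)`-confuses `C`-generated samples of every size `m`
(with `γ', ζ ∈ (0,1/2)`), then there is an adaptive additive adversary with fixed constant
budget at most `2η` that is a universal α-adversary for `C`. -/
theorem stmt11 {X : Type*} [Countable X] (C : Set (PMF X)) (α : ℝ) (hα : 1 ≤ α)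
    (Vs : Adversary X) (hVs : IsSubtractive Vs) (η : ℝ) (hη : η ∈ Set.Ioo (0 : ℝ) 1)
    (hb : FixedBudgetSub Vs η)
    (γ' ζ : ℝ) (hγ' : γ' ∈ Set.Ioo (0 : ℝ) (1 / 2)) (hζ : ζ ∈ Set.Ioo (0 : ℝ) (1 / 2))
    (hconf : ∀ m : ℕ, Confuses C Vs (4 * α * η + 4 * γ') ζ m) :
    ∃ (Vadd : Adversary X) (η' : ℝ), IsAdditive Vadd ∧ 0 < η' ∧ η' ≤ 2 * η ∧
      FixedBudgetAdd Vadd η' ∧ UniversalAdversary C α Vadd η' :=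
  stmt11_general C α Vs hVs η hη hb γ' ζ hγ' hζ hconf
end
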